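/- arXiv:0806.3902 — 4 statements merged into one kernel-verified Lean document; each statement's English description precedes it below -/
import Mathlib

section
/- For coprime positive integers a < b, the infinite series \sum_{n=1}^{\infty} g_{a,b}(n)^2 converges, where g_{a,b}(n) = \sum_{n=h^a r^b} h^{-(a+2b)/(2a+2b)} r^{-(2a+b)/(2a+2b)}. -/
set_option maxHeartbeats 1000000

open Finset

noncomputable def g (a b n : ℕ) : ℝ :=
  ∑ p ∈ (Finset.Icc 1 n ×ˢ Finset.Icc 1 n).filter (fun p => p.1 ^ a * p.2 ^ b = n),
    (p.1 : ℝ) ^ (-(((a : ℝ) + 2 * b) / (2 * a + 2 * b))) *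
      (p.2 : ℝ) ^ (-((2 * (a : ℝ) + b) / (2 * a + 2 * b)))

lemma rpow_swap {x y : ℝ} (hx : 0 ≤ x) (hy : 0 ≤ y) {m n : ℝ} (hn : n ≠ 0)
    (h : x ^ m = y ^ n) (c : ℝ) : y ^ (-c) = x ^ (-(m * c / n)) := by
  have h1 : (-c) = n * (-c / n) := by field_simp [mul_comm]
  rw [h1, Real.rpow_mul hy, ← h, ← Real.rpow_mul hx]
  congr 1
  field_simp

lemma key_eq {a b h1 r1 h2 r2 : ℕ} (hh1 : 0 < h1) (hr1 : 0 < r1)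
    (heq : h1 ^ a * r1 ^ b = h2 ^ a * r2 ^ b) :
    (h1 / Nat.gcd h1 h2) ^ a = (r2 / Nat.gcd r1 r2) ^ b ∧
      (h2 / Nat.gcd h1 h2) ^ a = (r1 / Nat.gcd r1 r2) ^ b := by
  have hd : 0 < Nat.gcd h1 h2 := Nat.gcd_pos_of_pos_left _ hh1
  have he : 0 < Nat.gcd r1 r2 := Nat.gcd_pos_of_pos_left _ hr1
  have hk1 : h1 = Nat.gcd h1 h2 * (h1 / Nat.gcd h1 h2) :=
    (Nat.mul_div_cancel' (Nat.gcd_dvd_left _ _)).symm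
  have hk2 : h2 = Nat.gcd h1 h2 * (h2 / Nat.gcd h1 h2) :=
    (Nat.mul_div_cancel' (Nat.gcd_dvd_right _ _)).symm
  have hs1 : r1 = Nat.gcd r1 r2 * (r1 / Nat.gcd r1 r2) :=
    (Nat.mul_div_cancel' (Nat.gcd_dvd_left _ _)).symm
  have hs2 : r2 = Nat.gcd r1 r2 * (r2 / Nat.gcd r1 r2) :=
    (Nat.mul_div_cancel' (Nat.gcd_dvd_right _ _)).symm
  set d := Nat.gcd h1 h2
  set e := Nat.gcd r1 r2
  set k1 := h1 / d
  set k2 := h2 / d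
  set s1 := r1 / e
  set s2 := r2 / e
  have hck : Nat.Coprime k1 k2 := Nat.coprime_div_gcd_div_gcd hd
  have hcs : Nat.Coprime s1 s2 := Nat.coprime_div_gcd_div_gcd he
  have heq2 : k1 ^ a * s1 ^ b = k2 ^ a * s2 ^ b := by
    have hpos : 0 < d ^ a * e ^ b := by positivity
    apply Nat.eq_of_mul_eq_mul_left hpos
    calc d ^ a * e ^ b * (k1 ^ a * s1 ^ b) = (d * k1) ^ a * (e * s1) ^ b := by ring
      _ = (d * k2) ^ a * (e * s2) ^ b := by rw [← hk1, ← hk2, ← hs1, ← hs2]; exact heq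
      _ = d ^ a * e ^ b * (k2 ^ a * s2 ^ b) := by ring
  constructor
  · apply Nat.dvd_antisymm
    · refine (Nat.Coprime.pow a a hck).dvd_of_dvd_mul_left ?_
      rw [← heq2]; exact dvd_mul_right _ _
    · refine (Nat.Coprime.pow b b hcs.symm).dvd_of_dvd_mul_right ?_
      rw [heq2]; exact dvd_mul_left _ _
  · apply Nat.dvd_antisymm
    · refine (Nat.Coprime.pow a a hck.symm).dvd_of_dvd_mul_left ?_
      rw [heq2]; exact dvd_mul_right _ _
    · refine (Nat.Coprime.pow b b hcs).dvd_of_dvd_mul_right ?_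
      rw [← heq2]; exact dvd_mul_left _ _

noncomputable def Pe (a b : ℕ) : ℝ := ((a : ℝ) + 2 * b) / (2 * a + 2 * b)

noncomputable def Qe (a b : ℕ) : ℝ := (2 * (a : ℝ) + b) / (2 * a + 2 * b)

noncomputable def tt (a b : ℕ) (p : ℕ × ℕ) : ℝ :=
  (p.1 : ℝ) ^ (-(Pe a b)) * (p.2 : ℝ) ^ (-(Qe a b))

def F (a b n : ℕ) : Finset (ℕ × ℕ) :=
  (Finset.Icc 1 n ×ˢ Finset.Icc 1 n).filter (fun p => p.1 ^ a * p.2 ^ b = n)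

lemma g_eq (a b n : ℕ) : g a b n = ∑ p ∈ F a b n, tt a b p := rfl

noncomputable def TT (a b : ℕ) (x : ℕ × ℕ × ℕ × ℕ) : ℝ :=
  (x.1 : ℝ) ^ (-(2 * Pe a b)) * ((x.2.1 : ℝ) ^ (-(2 * Qe a b)) *
    ((x.2.2.1 : ℝ) ^ (-(Pe a b + a * Qe a b / b)) *
      (x.2.2.2 : ℝ) ^ (-(Qe a b + b * Pe a b / a))))

def Phi (x : (ℕ × ℕ) × (ℕ × ℕ)) : ℕ × ℕ × ℕ × ℕ :=
  (Nat.gcd x.1.1 x.2.1, Nat.gcd x.1.2 x.2.2,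
    x.1.1 / Nat.gcd x.1.1 x.2.1, x.1.2 / Nat.gcd x.1.2 x.2.2)

theorem g_sq_summable (a b : ℕ) (ha : 0 < a) (hab : a < b) (hcop : Nat.Coprime a b) :
    Summable (fun n : ℕ => (g a b n) ^ 2) := by
  have hb : 0 < b := ha.trans hab
  have haR : (1 : ℝ) ≤ a := by exact_mod_cast ha
  have hbR : (1 : ℝ) ≤ b := by exact_mod_cast hb
  have haR0 : (0 : ℝ) < a := by linarith
  have hbR0 : (0 : ℝ) < b := by linarith
  have hden : (0 : ℝ) < 2 * a + 2 * b := by linarith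
  have h2P : 1 < 2 * Pe a b := by
    unfold Pe; rw [← mul_div_assoc, lt_div_iff₀ hden]; nlinarith
  have h2Q : 1 < 2 * Qe a b := by
    unfold Qe; rw [← mul_div_assoc, lt_div_iff₀ hden]; nlinarith
  have hKval : Pe a b + a * Qe a b / b = ((a : ℝ) ^ 2 + a * b + b ^ 2) / (b * (a + b)) := by
    unfold Pe Qe; field_simp; ring
  have hSval : Qe a b + b * Pe a b / a = ((a : ℝ) ^ 2 + a * b + b ^ 2) / (a * (a + b)) := by
    unfold Pe Qe; field_simp; ring
  have hK : 1 < Pe a b + a * Qe a b / b := by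
    rw [hKval, lt_div_iff₀ (by positivity)]; nlinarith
  have hS : 1 < Qe a b + b * Pe a b / a := by
    rw [hSval, lt_div_iff₀ (by positivity)]; nlinarith
  -- summability of the majorant
  have s1 : Summable (fun n : ℕ => (n : ℝ) ^ (-(2 * Pe a b))) :=
    Real.summable_nat_rpow.mpr (by linarith)
  have s2 : Summable (fun n : ℕ => (n : ℝ) ^ (-(2 * Qe a b))) :=
    Real.summable_nat_rpow.mpr (by linarith)
  have s3 : Summable (fun n : ℕ => (n : ℝ) ^ (-(Pe a b + a * Qe a b / b))) :=
    Real.summable_nat_rpow.mpr (by linarith)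
  have s4 : Summable (fun n : ℕ => (n : ℝ) ^ (-(Qe a b + b * Pe a b / a))) :=
    Real.summable_nat_rpow.mpr (by linarith)
  have nn : ∀ (c : ℝ) (n : ℕ), (0:ℝ) ≤ (n : ℝ) ^ (-c) := fun c n =>
    Real.rpow_nonneg (Nat.cast_nonneg n) _
  have s34 : Summable fun x : ℕ × ℕ =>
      (x.1 : ℝ) ^ (-(Pe a b + a * Qe a b / b)) * (x.2 : ℝ) ^ (-(Qe a b + b * Pe a b / a)) :=
    s3.mul_of_nonneg s4 (fun n => nn _ n) (fun n => nn _ n)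
  have s234 : Summable fun x : ℕ × ℕ × ℕ =>
      (x.1 : ℝ) ^ (-(2 * Qe a b)) * ((x.2.1 : ℝ) ^ (-(Pe a b + a * Qe a b / b)) *
        (x.2.2 : ℝ) ^ (-(Qe a b + b * Pe a b / a))) :=
    s2.mul_of_nonneg s34 (fun n => nn _ n)
      (fun x => mul_nonneg (Real.rpow_nonneg (Nat.cast_nonneg _) _)
        (Real.rpow_nonneg (Nat.cast_nonneg _) _))
  have hT : Summable (TT a b) :=
    s1.mul_of_nonneg s234 (fun n => nn _ n)
      (fun x => mul_nonneg (Real.rpow_nonneg (Nat.cast_nonneg _) _)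
        (mul_nonneg (Real.rpow_nonneg (Nat.cast_nonneg _) _)
          (Real.rpow_nonneg (Nat.cast_nonneg _) _)))
  have hTnn : ∀ x, 0 ≤ TT a b x := fun x => by
    unfold TT
    positivity
  refine summable_of_sum_le (c := ∑' x, TT a b x) (fun n => sq_nonneg _) (fun u => ?_)
  -- facts about members of F
  have hmemF : ∀ {n : ℕ} {p : ℕ × ℕ}, p ∈ F a b n → 0 < p.1 ∧ 0 < p.2 ∧ p.1 ^ a * p.2 ^ b = n := by
    intro n p hp
    simp only [F, Finset.mem_filter, Finset.mem_product, Finset.mem_Icc] at hp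
    exact ⟨hp.1.1.1, hp.1.2.1, hp.2⟩
  -- step 1: g n ^ 2 as a sum over pairs
  have hgsq : ∀ n, g a b n ^ 2 = ∑ x ∈ F a b n ×ˢ F a b n, tt a b x.1 * tt a b x.2 := by
    intro n
    rw [g_eq, sq, Finset.sum_mul_sum, ← Finset.sum_product']
  have hdisj : (↑u : Set ℕ).PairwiseDisjoint (fun n => F a b n ×ˢ F a b n) := by
    intro m _ n _ hmn
    refine Finset.disjoint_left.mpr ?_
    intro x hxm hxn
    rw [Finset.mem_product] at hxm hxn
    exact hmn (((hmemF hxm.1).2.2).symm.trans (hmemF hxn.1).2.2)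
  set B := u.biUnion (fun n => F a b n ×ˢ F a b n) with hB
  have step2 : ∑ n ∈ u, g a b n ^ 2 = ∑ x ∈ B, tt a b x.1 * tt a b x.2 := by
    rw [Finset.sum_biUnion hdisj]
    exact Finset.sum_congr rfl (fun n _ => hgsq n)
  -- membership facts for B
  have hmemB : ∀ x ∈ B, 0 < x.1.1 ∧ 0 < x.1.2 ∧ 0 < x.2.1 ∧ 0 < x.2.2 ∧
      x.1.1 ^ a * x.1.2 ^ b = x.2.1 ^ a * x.2.2 ^ b := by
    intro x hx
    rw [hB, Finset.mem_biUnion] at hx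
    obtain ⟨n, _, hx⟩ := hx
    rw [Finset.mem_product] at hx
    obtain ⟨h1, h2⟩ := hx
    obtain ⟨p1, p2, p3⟩ := hmemF h1
    obtain ⟨q1, q2, q3⟩ := hmemF h2
    exact ⟨p1, p2, q1, q2, p3.trans q3.symm⟩
  -- per-element equality
  have hterm : ∀ x ∈ B, tt a b x.1 * tt a b x.2 = TT a b (Phi x) := by
    intro x hx
    obtain ⟨hp1, hp2, hq1, hq2, heq⟩ := hmemB x hx
    obtain ⟨e1, e2⟩ := key_eq hp1 hp2 heq
    simp only [tt, TT, Phi]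
    set d := Nat.gcd x.1.1 x.2.1 with hd'
    set e := Nat.gcd x.1.2 x.2.2 with he'
    have hd : 0 < d := Nat.gcd_pos_of_pos_left _ hp1
    have he : 0 < e := Nat.gcd_pos_of_pos_left _ hp2
    have hdh1 : d ∣ x.1.1 := Nat.gcd_dvd_left _ _
    have hdh2 : d ∣ x.2.1 := Nat.gcd_dvd_right _ _
    have heh1 : e ∣ x.1.2 := Nat.gcd_dvd_left _ _
    have heh2 : e ∣ x.2.2 := Nat.gcd_dvd_right _ _
    set k1 := x.1.1 / d with hk1'
    set k2 := x.2.1 / d with hk2'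
    set s1 := x.1.2 / e with hs1'
    set s2 := x.2.2 / e with hs2'
    have hk1p : 0 < k1 := Nat.div_pos (Nat.le_of_dvd hp1 hdh1) hd
    have hk2p : 0 < k2 := Nat.div_pos (Nat.le_of_dvd hq1 hdh2) hd
    have hs1p : 0 < s1 := Nat.div_pos (Nat.le_of_dvd hp2 heh1) he
    have hs2p : 0 < s2 := Nat.div_pos (Nat.le_of_dvd hq2 heh2) he
    have c11 : (x.1.1 : ℝ) = (d : ℝ) * k1 := by
      rw [← Nat.cast_mul]; exact_mod_cast congrArg (Nat.cast (R := ℝ))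
        (Nat.mul_div_cancel' hdh1).symm
    have c21 : (x.2.1 : ℝ) = (d : ℝ) * k2 := by
      rw [← Nat.cast_mul]; exact_mod_cast congrArg (Nat.cast (R := ℝ))
        (Nat.mul_div_cancel' hdh2).symm
    have c12 : (x.1.2 : ℝ) = (e : ℝ) * s1 := by
      rw [← Nat.cast_mul]; exact_mod_cast congrArg (Nat.cast (R := ℝ))
        (Nat.mul_div_cancel' heh1).symm
    have c22 : (x.2.2 : ℝ) = (e : ℝ) * s2 := by
      rw [← Nat.cast_mul]; exact_mod_cast congrArg (Nat.cast (R := ℝ))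
        (Nat.mul_div_cancel' heh2).symm
    have e1R : (k1 : ℝ) ^ (a : ℝ) = (s2 : ℝ) ^ (b : ℝ) := by
      rw [Real.rpow_natCast, Real.rpow_natCast]; exact_mod_cast e1
    have e2R : (s1 : ℝ) ^ (b : ℝ) = (k2 : ℝ) ^ (a : ℝ) := by
      rw [Real.rpow_natCast, Real.rpow_natCast]; exact_mod_cast e2.symm
    have hs2R : (s2 : ℝ) ^ (-(Qe a b)) = (k1 : ℝ) ^ (-((a:ℝ) * Qe a b / (b:ℝ))) :=
      rpow_swap (Nat.cast_nonneg _) (Nat.cast_nonneg _)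
        (by exact_mod_cast hb.ne') e1R _
    have hk2R : (k2 : ℝ) ^ (-(Pe a b)) = (s1 : ℝ) ^ (-((b:ℝ) * Pe a b / (a:ℝ))) :=
      rpow_swap (Nat.cast_nonneg _) (Nat.cast_nonneg _)
        (by exact_mod_cast ha.ne') e2R _
    have hdR : (0:ℝ) < d := by exact_mod_cast hd
    have heR : (0:ℝ) < e := by exact_mod_cast he
    have hk1R : (0:ℝ) < k1 := by exact_mod_cast hk1p
    have hs1R : (0:ℝ) < s1 := by exact_mod_cast hs1p
    rw [c11, c21, c12, c22,
      Real.mul_rpow hdR.le (Nat.cast_nonneg k1),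
      Real.mul_rpow hdR.le (Nat.cast_nonneg k2),
      Real.mul_rpow heR.le (Nat.cast_nonneg s1),
      Real.mul_rpow heR.le (Nat.cast_nonneg s2),
      hs2R, hk2R,
      show -(2 * Pe a b) = -Pe a b + -Pe a b by ring, Real.rpow_add hdR,
      show -(2 * Qe a b) = -Qe a b + -Qe a b by ring, Real.rpow_add heR,
      show -(Pe a b + ↑a * Qe a b / ↑b) = -Pe a b + -((a:ℝ) * Qe a b / (b:ℝ)) by ring,
      Real.rpow_add hk1R,
      show -(Qe a b + ↑b * Pe a b / ↑a) = -Qe a b + -((b:ℝ) * Pe a b / (a:ℝ)) by ring,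
      Real.rpow_add hs1R]
    ring
  -- injectivity
  have hinj : ∀ x ∈ B, ∀ y ∈ B, Phi x = Phi y → x = y := by
    intro x hx y hy hxy
    obtain ⟨hp1, hp2, hq1, hq2, heqx⟩ := hmemB x hx
    obtain ⟨hp1', hp2', hq1', hq2', heqy⟩ := hmemB y hy
    obtain ⟨ex1, ex2⟩ := key_eq hp1 hp2 heqx
    obtain ⟨ey1, ey2⟩ := key_eq hp1' hp2' heqy
    have c1 : Nat.gcd x.1.1 x.2.1 = Nat.gcd y.1.1 y.2.1 := congrArg Prod.fst hxy
    have c2 : Nat.gcd x.1.2 x.2.2 = Nat.gcd y.1.2 y.2.2 := congrArg (fun z => z.2.1) hxy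
    have c3 : x.1.1 / Nat.gcd x.1.1 x.2.1 = y.1.1 / Nat.gcd y.1.1 y.2.1 :=
      congrArg (fun z => z.2.2.1) hxy
    have c4 : x.1.2 / Nat.gcd x.1.2 x.2.2 = y.1.2 / Nat.gcd y.1.2 y.2.2 :=
      congrArg (fun z => z.2.2.2) hxy
    have m11 : x.1.1 = y.1.1 := by
      rw [← Nat.mul_div_cancel' (Nat.gcd_dvd_left x.1.1 x.2.1),
          ← Nat.mul_div_cancel' (Nat.gcd_dvd_left y.1.1 y.2.1), c3, c1]
    have m12 : x.1.2 = y.1.2 := by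
      rw [← Nat.mul_div_cancel' (Nat.gcd_dvd_left x.1.2 x.2.2),
          ← Nat.mul_div_cancel' (Nat.gcd_dvd_left y.1.2 y.2.2), c4, c2]
    have m21 : x.2.1 = y.2.1 := by
      have e5 : (x.2.1 / Nat.gcd x.1.1 x.2.1) ^ a = (y.2.1 / Nat.gcd y.1.1 y.2.1) ^ a := by
        rw [ex2, ey2, c4]
      have e6 : x.2.1 / Nat.gcd x.1.1 x.2.1 = y.2.1 / Nat.gcd y.1.1 y.2.1 :=
        Nat.pow_left_injective ha.ne' e5
      rw [← Nat.mul_div_cancel' (Nat.gcd_dvd_right x.1.1 x.2.1),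
          ← Nat.mul_div_cancel' (Nat.gcd_dvd_right y.1.1 y.2.1), e6, c1]
    have m22 : x.2.2 = y.2.2 := by
      have e5 : (x.2.2 / Nat.gcd x.1.2 x.2.2) ^ b = (y.2.2 / Nat.gcd y.1.2 y.2.2) ^ b := by
        rw [← ex1, ← ey1, c3]
      have e6 : x.2.2 / Nat.gcd x.1.2 x.2.2 = y.2.2 / Nat.gcd y.1.2 y.2.2 :=
        Nat.pow_left_injective hb.ne' e5
      rw [← Nat.mul_div_cancel' (Nat.gcd_dvd_right x.1.2 x.2.2),
          ← Nat.mul_div_cancel' (Nat.gcd_dvd_right y.1.2 y.2.2), e6, c2]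
    exact Prod.ext_iff.mpr ⟨Prod.ext_iff.mpr ⟨m11, m12⟩, Prod.ext_iff.mpr ⟨m21, m22⟩⟩
  calc ∑ n ∈ u, g a b n ^ 2 = ∑ x ∈ B, tt a b x.1 * tt a b x.2 := step2
    _ = ∑ x ∈ B, TT a b (Phi x) := Finset.sum_congr rfl hterm
    _ = ∑ y ∈ B.image Phi, TT a b y := (Finset.sum_image hinj).symm
    _ ≤ ∑' x, TT a b x := Summable.sum_le_tsum _ (fun i _ => hTnn i) hT
end

section
/- For coprime positive integers a < b and any real X > 2, the tail sum satisfies \sum_{n > X} g_{a,b}(n)^2 = O(X^{-a/((a+b)b)}). -/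
open Finset

/-!
If `h ^ a * r ^ b = h' ^ a * r' ^ b` with `a, b` coprime, then `(h, r) = (v ^ b * h₁, u ^ a * r₁)`
and `(h', r') = (u ^ b * h₁, v ^ a * r₁)` for some `u, v, h₁, r₁` (with `h₁ = gcd h h'`,
`r₁ = gcd r r'`). Expanding `g n ^ 2` over pairs of representations of `n` and substituting this
parametrization bounds the tail by the sum of
`(u v) ^ (-σ) * h ^ (-1 - b/(a+b)) * r ^ (-1 - a/(a+b))` over `(u v) ^ (a b) * h ^ a * r ^ b > X`,
where `σ = (a² + a b + b²)/(a + b)`. The sum over `r` is the tail of a p-series,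
`O((X / ((u v) ^ (a b) * h ^ a)) ^ (-a/((a+b) b)))`; what is left is summable over `h` and over
`u, v` because `a < b`, the exponents being `-1 - (b-a)/b` and `-b`.
-/

-- Finite sums over arbitrary `S`, so that no summability is presupposed.
def HasTailBound {ι : Type*} (w F : ι → ℝ) (γ : ℝ) : Prop :=
  ∃ C, ∀ Y > 0, ∀ S : Finset ι, ∑ z ∈ S with Y < F z, w z ≤ C * Y ^ (-γ)

lemma hasTailBound_natCast_rpow_neg {δ : ℝ} (hδ : 0 < δ) :
    HasTailBound (fun r : ℕ => (r : ℝ) ^ (-(1 + δ))) (fun r => r) δ := by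
  set f : ℝ → ℝ := fun x => x ^ (-(1 + δ))
  have hsum : Summable (fun r : ℕ => f r) := Real.summable_nat_rpow.2 (by linarith)
  refine ⟨max (∑' r : ℕ, f r) (2 ^ δ / δ), fun Y hY S => ?_⟩
  rcases lt_or_ge Y 1 with hY1 | hY1
  · calc ∑ r ∈ S with Y < ((r : ℕ) : ℝ), f r ≤ ∑' r : ℕ, f r :=
          hsum.sum_le_tsum _ fun _ _ => by positivity
      _ ≤ max (∑' r : ℕ, f r) (2 ^ δ / δ) * Y ^ (-δ) :=
          (le_max_left _ _).trans <| le_mul_of_one_le_right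
            ((by positivity : (0 : ℝ) ≤ 2 ^ δ / δ).trans (le_max_right _ _))
            (Real.one_le_rpow_of_pos_of_le_one_of_nonpos hY hY1.le (by linarith))
  · set m := ⌊Y⌋₊
    have hm : (1 : ℝ) ≤ m := by exact_mod_cast Nat.le_floor (by exact_mod_cast hY1)
    have hmY : Y / 2 ≤ m := by linarith [Nat.lt_floor_add_one Y]
    have hsub : {r ∈ S | Y < ((r : ℕ) : ℝ)} ⊆ (Ico m (S.sup id)).image (· + 1) := by
      intro r hr
      rw [mem_filter] at hr
      have : m < r := (Nat.floor_lt hY.le).2 hr.2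
      have : r ≤ S.sup id := le_sup (f := id) hr.1
      exact mem_image.2 ⟨r - 1, mem_Ico.2 (by omega), by omega⟩
    have hanti : AntitoneOn f (Set.Ici (m : ℝ)) := fun x hx y _ hxy =>
      Real.rpow_le_rpow_of_nonpos (by linarith [hx.out]) hxy (by linarith)
    calc ∑ r ∈ S with Y < ((r : ℕ) : ℝ), f r ≤ ∑ i ∈ Ico m (S.sup id), f ↑(i + 1) :=
          (sum_le_sum_of_subset_of_nonneg hsub fun _ _ _ => by positivity).trans
            (sum_image_le_of_nonneg fun _ _ => by positivity)
      _ ≤ ∫ x in Set.Ioi (m : ℝ), f x :=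
          (hanti.mono Set.Icc_subset_Ici_self).sum_Ico_le_integral
            (integrableOn_Ioi_rpow_of_lt (by linarith) (by linarith))
            fun x hx => Real.rpow_nonneg ((Nat.cast_nonneg m).trans hx.out.le) _
      _ = (m : ℝ) ^ (-δ) / δ := by
          rw [integral_Ioi_rpow_of_lt (by linarith) (by linarith)]
          ring_nf
      _ ≤ (Y / 2) ^ (-δ) / δ := by
          gcongr ?_ / _
          exact Real.rpow_le_rpow_of_nonpos (by positivity) hmY (by linarith)
      _ = 2 ^ δ / δ * Y ^ (-δ) := by
          rw [Real.div_rpow hY.le zero_le_two, Real.rpow_neg zero_le_two]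
          field_simp
      _ ≤ max (∑' r : ℕ, f r) (2 ^ δ / δ) * Y ^ (-δ) := by
          gcongr
          exact le_max_right _ _

namespace HasTailBound

variable {ι : Type*} {w F : ι → ℝ} {γ : ℝ}

lemma rpow (h : HasTailBound w F γ) (hF : ∀ z, 0 ≤ F z) {b : ℝ} (hb : 0 < b) :
    HasTailBound w (fun z => F z ^ b) (γ / b) := by
  obtain ⟨C, hC⟩ := h
  refine ⟨C, fun Y hY S => ?_⟩
  calc ∑ z ∈ S with Y < F z ^ b, w z = ∑ z ∈ S with Y ^ b⁻¹ < F z, w z := by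
        simp_rw [Real.rpow_inv_lt_iff_of_pos hY.le (hF _) hb]
    _ ≤ C * (Y ^ b⁻¹) ^ (-γ) := hC _ (by positivity) S
    _ = C * Y ^ (-(γ / b)) := by rw [← Real.rpow_mul hY.le]; ring_nf

lemma natProd (h : HasTailBound w F γ) (hw : ∀ z, 0 ≤ w z) {a s : ℝ} (ha : 0 < a)
    (hs : 1 + a * γ < s) :
    HasTailBound (fun p : ℕ × ι => (p.1 : ℝ) ^ (-s) * w p.2)
      (fun p => (p.1 : ℝ) ^ a * F p.2) γ := by
  classical
  obtain ⟨C, hC⟩ := h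
  have hC0 : 0 ≤ C := by simpa using hC 1 one_pos ∅
  have hsum : Summable (fun x : ℕ => (x : ℝ) ^ (a * γ - s)) :=
    Real.summable_nat_rpow.2 (by linarith)
  refine ⟨C * ∑' x : ℕ, (x : ℝ) ^ (a * γ - s), fun Y hY S => ?_⟩
  have fiber (x : ℕ) : ∑ z ∈ S.image Prod.snd with Y < (x : ℝ) ^ a * F z,
      (x : ℝ) ^ (-s) * w z ≤ C * Y ^ (-γ) * (x : ℝ) ^ (a * γ - s) := by
    rcases Nat.eq_zero_or_pos x with rfl | hx
    · have hY0 (z : ι) : ¬Y < ((0 : ℕ) : ℝ) ^ a * F z := by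
        simpa [Real.zero_rpow ha.ne'] using hY.le
      simp only [hY0, filter_false, sum_empty]
      positivity
    have hxa : 0 < (x : ℝ) ^ a := by positivity
    rw [← mul_sum]
    calc (x : ℝ) ^ (-s) * ∑ z ∈ S.image Prod.snd with Y < (x : ℝ) ^ a * F z, w z
        = (x : ℝ) ^ (-s) * ∑ z ∈ S.image Prod.snd with Y / (x : ℝ) ^ a < F z, w z := by
          simp_rw [div_lt_iff₀' hxa]
      _ ≤ (x : ℝ) ^ (-s) * (C * (Y / (x : ℝ) ^ a) ^ (-γ)) := by
          gcongr
          exact hC _ (by positivity) _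
      _ = C * Y ^ (-γ) * (x : ℝ) ^ (a * γ - s) := by
          rw [Real.div_rpow hY.le hxa.le, ← Real.rpow_mul (Nat.cast_nonneg x), div_eq_mul_inv,
            ← Real.rpow_neg (Nat.cast_nonneg x), show a * γ - s = -s + -(a * -γ) by ring,
            Real.rpow_add (by exact_mod_cast hx)]
          ring
  calc ∑ p ∈ S with Y < (p.1 : ℝ) ^ a * F p.2, (p.1 : ℝ) ^ (-s) * w p.2
      ≤ ∑ p ∈ S.image Prod.fst ×ˢ S.image Prod.snd with Y < (p.1 : ℝ) ^ a * F p.2,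
          (p.1 : ℝ) ^ (-s) * w p.2 :=
        sum_le_sum_of_subset_of_nonneg (filter_subset_filter _ subset_product)
          fun p _ _ => mul_nonneg (by positivity) (hw _)
    _ = ∑ x ∈ S.image Prod.fst, ∑ z ∈ S.image Prod.snd with Y < (x : ℝ) ^ a * F z,
          (x : ℝ) ^ (-s) * w z := by
        simp only [sum_filter, sum_product]
    _ ≤ ∑ x ∈ S.image Prod.fst, C * Y ^ (-γ) * (x : ℝ) ^ (a * γ - s) :=
        sum_le_sum fun x _ => fiber x
    _ ≤ C * Y ^ (-γ) * ∑' x : ℕ, (x : ℝ) ^ (a * γ - s) := by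
        rw [← mul_sum]
        gcongr
        exact hsum.sum_le_tsum _ fun _ _ => by positivity
    _ = C * (∑' x : ℕ, (x : ℝ) ^ (a * γ - s)) * Y ^ (-γ) := by ring

end HasTailBound

lemma exists_eq_of_pow_mul_pow_eq {a b : ℕ} (hab : a.Coprime b) {h r h' r' : ℕ}
    (hh : 0 < h) (hr : 0 < r) (heq : h ^ a * r ^ b = h' ^ a * r' ^ b) :
    ∃ u v h₁ r₁ : ℕ, h = v ^ b * h₁ ∧ r = u ^ a * r₁ ∧ h' = u ^ b * h₁ ∧ r' = v ^ a * r₁ := by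
  obtain ⟨d, x, y, hd, hxy, rfl, rfl⟩ :=
    Nat.exists_coprime' (Nat.gcd_pos_of_pos_left h' hh)
  obtain ⟨e, w, z, he, hwz, rfl, rfl⟩ :=
    Nat.exists_coprime' (Nat.gcd_pos_of_pos_left r' hr)
  have key : x ^ a * w ^ b = y ^ a * z ^ b := by
    apply Nat.eq_of_mul_eq_mul_left (show 0 < d ^ a * e ^ b by positivity)
    linear_combination heq
  have hxz : x ^ a = z ^ b := Nat.dvd_antisymm
    ((hxy.pow a a).dvd_of_dvd_mul_left (Dvd.intro _ key))
    ((hwz.symm.pow b b).dvd_of_dvd_mul_left ⟨y ^ a, by rw [mul_comm, key, mul_comm]⟩)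
  have hyw : y ^ a = w ^ b := Nat.dvd_antisymm
    ((hxy.symm.pow a a).dvd_of_dvd_mul_left (Dvd.intro _ key.symm))
    ((hwz.pow b b).dvd_of_dvd_mul_left ⟨x ^ a, by rw [mul_comm, ← key, mul_comm]⟩)
  have hab' : a ≠ 0 ∨ b ≠ 0 := by
    by_contra! h0
    simp [h0.1, h0.2] at hab
  obtain ⟨v, rfl, rfl⟩ := Nat.exists_eq_pow_of_pow_eq_pow hab' hxz
  obtain ⟨u, rfl, rfl⟩ := Nat.exists_eq_pow_of_pow_eq_pow hab' hyw
  simp only [Nat.Coprime.gcd_eq_one hab, Nat.div_one]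
  exact ⟨u, v, d, e, rfl, rfl, rfl, rfl⟩

section Representations

variable (a b : ℕ)

def reps (n : ℕ) : Finset (ℕ × ℕ) :=
  (Icc 1 n ×ˢ Icc 1 n).filter fun p => p.1 ^ a * p.2 ^ b = n

noncomputable def repWeight (p : ℕ × ℕ) : ℝ :=
  (p.1 : ℝ) ^ (-(((a : ℝ) + 2 * b) / (2 * a + 2 * b))) *
    (p.2 : ℝ) ^ (-((2 * (a : ℝ) + b) / (2 * a + 2 * b)))

def paramPair : ℕ × ℕ × ℕ × ℕ → (ℕ × ℕ) × (ℕ × ℕ)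
  | (u, v, h, r) => ((v ^ b * h, u ^ a * r), (u ^ b * h, v ^ a * r))

noncomputable def quadWeight : ℕ × ℕ × ℕ × ℕ → ℝ
  | (u, v, h, r) =>
    (u : ℝ) ^ (-(((a : ℝ) ^ 2 + a * b + b ^ 2) / (a + b))) *
      ((v : ℝ) ^ (-(((a : ℝ) ^ 2 + a * b + b ^ 2) / (a + b))) *
        ((h : ℝ) ^ (-(1 + b / ((a : ℝ) + b))) * (r : ℝ) ^ (-(1 + a / ((a : ℝ) + b)))))

noncomputable def quadHeight : ℕ × ℕ × ℕ × ℕ → ℝ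
  | (u, v, h, r) =>
    (u : ℝ) ^ ((a : ℝ) * b) *
      ((v : ℝ) ^ ((a : ℝ) * b) * ((h : ℝ) ^ (a : ℝ) * (r : ℝ) ^ (b : ℝ)))

lemma disjoint_reps {m n : ℕ} (hmn : m ≠ n) : Disjoint (reps a b m) (reps a b n) := by
  rw [disjoint_left]
  intro p hm hn
  exact hmn ((mem_filter.1 hm).2.symm.trans (mem_filter.1 hn).2)

lemma sum_ite_sq_g_eq (X : ℝ) (F : Finset ℕ) :
    ∑ n ∈ F, (if X < (n : ℝ) then g a b n ^ 2 else 0) =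
      ∑ q ∈ {n ∈ F | X < ((n : ℕ) : ℝ)}.biUnion (fun n => reps a b n ×ˢ reps a b n),
        repWeight a b q.1 * repWeight a b q.2 := by
  rw [← sum_filter, sum_biUnion]
  · refine sum_congr rfl fun n _ => ?_
    rw [show g a b n = ∑ p ∈ reps a b n, repWeight a b p from rfl, sq, sum_mul_sum,
      sum_product]
  · intro m _ n _ hmn
    exact disjoint_product.2 (Or.inl (disjoint_reps a b hmn))

lemma quadHeight_eq_cast (y : ℕ × ℕ × ℕ × ℕ) :
    quadHeight a b y = (((paramPair a b y).1.1 ^ a * (paramPair a b y).1.2 ^ b : ℕ) : ℝ) := by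
  obtain ⟨u, v, h, r⟩ := y
  simp only [quadHeight, paramPair, ← Nat.cast_mul, Real.rpow_natCast]
  push_cast
  ring

variable {a b}

lemma exists_paramPair_eq (hab : a.Coprime b) {n : ℕ} {q : (ℕ × ℕ) × (ℕ × ℕ)}
    (hq : q ∈ reps a b n ×ˢ reps a b n) :
    ∃ y, paramPair a b y = q ∧ quadHeight a b y = n := by
  obtain ⟨⟨h, r⟩, ⟨h', r'⟩⟩ := q
  simp only [reps, mem_product, mem_filter, mem_Icc] at hq
  obtain ⟨⟨⟨⟨hh, -⟩, hr, -⟩, hn⟩, -, hn'⟩ := hq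
  obtain ⟨u, v, h₁, r₁, rfl, rfl, rfl, rfl⟩ :=
    exists_eq_of_pow_mul_pow_eq hab hh hr (hn.trans hn'.symm)
  exact ⟨(u, v, h₁, r₁), rfl, by rw [quadHeight_eq_cast, ← hn]; rfl⟩

-- Also for zero entries, since `0 ^ s = 0` for `s ≠ 0`.
lemma repWeight_paramPair (hab : 0 < a + b) (y : ℕ × ℕ × ℕ × ℕ) :
    repWeight a b (paramPair a b y).1 * repWeight a b (paramPair a b y).2 = quadWeight a b y := by
  obtain ⟨u, v, h, r⟩ := y
  have hab' : (0 : ℝ) < a + b := by exact_mod_cast hab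
  set A : ℝ := ((a : ℝ) + 2 * b) / (2 * a + 2 * b)
  set B : ℝ := (2 * (a : ℝ) + b) / (2 * a + 2 * b)
  have hσ : -(((a : ℝ) ^ 2 + a * b + b ^ 2) / (a + b)) = a * -B + b * -A := by
    simp only [A, B]; field_simp; ring
  have hh : -(1 + b / ((a : ℝ) + b)) = -A + -A := by simp only [A]; field_simp; ring
  have hr : -(1 + a / ((a : ℝ) + b)) = -B + -B := by simp only [B]; field_simp; ring
  have hσ0 : (a : ℝ) * -B + b * -A ≠ 0 := by
    rw [← hσ, neg_ne_zero]
    exact (div_pos (by nlinarith) hab').ne'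
  have hA0 : -A + -A ≠ 0 := by rw [← hh]; apply neg_ne_zero.2; positivity
  have hB0 : -B + -B ≠ 0 := by rw [← hr]; apply neg_ne_zero.2; positivity
  simp only [repWeight, paramPair, quadWeight, Nat.cast_mul, Nat.cast_pow]
  rw [hσ, hh, hr]
  simp only [Real.mul_rpow (pow_nonneg (Nat.cast_nonneg _) _) (Nat.cast_nonneg _),
    ← Real.rpow_natCast_mul (Nat.cast_nonneg _), Real.rpow_add' (Nat.cast_nonneg _) hσ0,
    Real.rpow_add' (Nat.cast_nonneg _) hA0, Real.rpow_add' (Nat.cast_nonneg _) hB0]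
  ring

lemma hasTailBound_quadWeight (ha : 0 < a) (hab : a < b) :
    HasTailBound (quadWeight a b) (quadHeight a b) (a / (a + b) / b) := by
  have ha' : (0 : ℝ) < a := by exact_mod_cast ha
  have hab' : (a : ℝ) < b := by exact_mod_cast hab
  have hb' : (2 : ℝ) ≤ b := by exact_mod_cast (show 2 ≤ b by omega)
  have hr := (hasTailBound_natCast_rpow_neg (δ := a / (a + b)) (by positivity)).rpow
    (fun r => Nat.cast_nonneg r) (by positivity : (0 : ℝ) < b)
  have hh : 1 + a * (a / (a + b) / b) < 1 + b / ((a : ℝ) + b) := by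
    field_simp
    nlinarith
  have huv : 1 + a * b * (a / (a + b) / b) < ((a : ℝ) ^ 2 + a * b + b ^ 2) / (a + b) := by
    field_simp
    nlinarith
  have hab0 : (0 : ℝ) < a * b := by positivity
  exact ((hr.natProd (fun _ => by positivity) ha' hh).natProd (fun _ => by positivity) hab0
    huv).natProd (fun _ => by positivity) hab0 huv

end Representations

theorem g_sq_tail (a b : ℕ) (ha : 0 < a) (hab : a < b) (hcop : Nat.Coprime a b) :
    ∃ C : ℝ, 0 < C ∧ ∀ X : ℝ, 2 < X →
      ∑' n : ℕ, (if X < (n : ℝ) then (g a b n) ^ 2 else 0) ≤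
        C * X ^ (-((a : ℝ) / ((a + b) * b))) := by
  classical
  obtain ⟨C, hC⟩ := hasTailBound_quadWeight ha hab
  refine ⟨max C 1, by positivity, fun X hX => ?_⟩
  have hX0 : 0 < X := by linarith
  refine tsum_le_of_sum_le' (by positivity) fun F => ?_
  set P := {n ∈ F | X < ((n : ℕ) : ℝ)}.biUnion (fun n => reps a b n ×ˢ reps a b n)
  have hP : (P : Set _) ⊆ paramPair a b '' {y | X < quadHeight a b y} := by
    intro q hq
    obtain ⟨n, hn, hq⟩ := mem_biUnion.1 hq
    obtain ⟨y, hy, hyn⟩ := exists_paramPair_eq hcop hq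
    exact ⟨y, show X < _ by rw [hyn]; exact (mem_filter.1 hn).2, hy⟩
  obtain ⟨T, hT, hTP⟩ := subset_set_image_iff.1 hP
  calc ∑ n ∈ F, (if X < (n : ℝ) then g a b n ^ 2 else 0)
      = ∑ q ∈ T.image (paramPair a b), repWeight a b q.1 * repWeight a b q.2 := by
        rw [sum_ite_sq_g_eq, hTP]
    _ ≤ ∑ y ∈ T, repWeight a b (paramPair a b y).1 * repWeight a b (paramPair a b y).2 :=
        sum_image_le_of_nonneg fun _ _ => by unfold repWeight; positivity
    _ = ∑ y ∈ T with X < quadHeight a b y, quadWeight a b y := by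
        rw [filter_true_of_mem fun y hy => show X < quadHeight a b y from hT hy]
        exact sum_congr rfl fun y _ => repWeight_paramPair (by omega) y
    _ ≤ C * X ^ (-((a : ℝ) / (a + b) / b)) := hC X hX0 T
    _ ≤ max C 1 * X ^ (-((a : ℝ) / ((a + b) * b))) := by
        rw [div_div]
        gcongr
        exact le_max_left _ _
end

section
/- For coprime positive integers a < b and any real X > 2, \sum_{n \leq X} g_{a,b}(n) \ll X^{1/(2(a+b))} \log X, with implied constant depending only on a, b. -/
open Finset

/-- Partial sums of `r^(-β)` for `0 < β < 1`. -/
lemma sum_rpow_neg_le {β : ℝ} (h0 : 0 < β) (h1 : β < 1) (m : ℕ) :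
    ∑ r ∈ Icc 1 m, (r : ℝ) ^ (-β) ≤ (m : ℝ) ^ (1 - β) / (1 - β) := by
  have hs : 0 < 1 - β := by linarith
  induction m with
  | zero => simp [Real.zero_rpow (by linarith : (1:ℝ) - β ≠ 0)]
  | succ m ih =>
    rw [Finset.sum_Icc_succ_top (by omega : 1 ≤ m + 1)]
    have hm1 : (0:ℝ) < (m:ℝ) + 1 := by positivity
    set y : ℝ := (m:ℝ) + 1 with hy
    have hcast : ((m+1 : ℕ) : ℝ) = y := by push_cast; ring
    rw [hcast]
    -- AM-GM : m^(1-β) * y^β ≤ m + β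
    have hamgm : (m:ℝ) ^ (1-β) * y ^ β ≤ (m:ℝ) + β := by
      have := Real.geom_mean_le_arith_mean2_weighted
        (by linarith : (0:ℝ) ≤ 1 - β) h0.le (Nat.cast_nonneg m) hm1.le (by ring)
      calc (m:ℝ) ^ (1-β) * y ^ β ≤ (1-β) * m + β * y := this
        _ = (m:ℝ) + β := by rw [hy]; ring
    have hyβ : (0:ℝ) < y ^ β := Real.rpow_pos_of_pos hm1 β
    have hynβ : (0:ℝ) < y ^ (-β) := Real.rpow_pos_of_pos hm1 (-β)
    have hmul : y ^ β * y ^ (-β) = 1 := by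
      rw [← Real.rpow_add hm1]; simp
    have hkey : (m:ℝ) ^ (1-β) ≤ ((m:ℝ) + β) * y ^ (-β) := by
      have := mul_le_mul_of_nonneg_right hamgm hynβ.le
      calc (m:ℝ) ^ (1-β) = (m:ℝ) ^ (1-β) * (y ^ β * y ^ (-β)) := by rw [hmul, mul_one]
        _ = (m:ℝ) ^ (1-β) * y ^ β * y ^ (-β) := by ring
        _ ≤ ((m:ℝ) + β) * y ^ (-β) := this
    have hsplit : y ^ (1-β) = y * y ^ (-β) := by
      nth_rewrite 2 [show y = y ^ (1:ℝ) by rw [Real.rpow_one]]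
      rw [← Real.rpow_add hm1]; congr 1
    have hmain : (m:ℝ) ^ (1-β) + (1-β) * y ^ (-β) ≤ y ^ (1-β) := by
      rw [hsplit]
      have : ((m:ℝ) + β) * y ^ (-β) + (1-β) * y ^ (-β) = y * y ^ (-β) := by
        rw [hy]; ring
      linarith
    calc ∑ r ∈ Icc 1 m, (r : ℝ) ^ (-β) + y ^ (-β)
        ≤ (m:ℝ) ^ (1-β) / (1-β) + y ^ (-β) := by linarith
      _ = ((m:ℝ) ^ (1-β) + (1-β) * y ^ (-β)) / (1-β) := by field_simp
      _ ≤ y ^ (1-β) / (1-β) := by gcongr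
  
/-- Harmonic sum bound. -/
lemma sum_inv_le (N : ℕ) : ∑ h ∈ Icc 1 N, (h:ℝ)⁻¹ ≤ 1 + Real.log N := by
  have h1 := harmonic_le_one_add_log N
  rw [harmonic_eq_sum_Icc] at h1
  push_cast at h1
  exact h1

theorem g_partial_sum (a b : ℕ) (ha : 0 < a) (hab : a < b) (hcop : Nat.Coprime a b) :
    ∃ C : ℝ, 0 < C ∧ ∀ X : ℝ, 2 < X →
      ∑ n ∈ Finset.Icc 1 ⌊X⌋₊, g a b n ≤
        C * X ^ ((1 : ℝ) / (2 * (a + b))) * Real.log X := by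
  have hb : 0 < b := ha.trans hab
  set α : ℝ := ((a : ℝ) + 2 * b) / (2 * a + 2 * b) with hα
  set β : ℝ := (2 * (a : ℝ) + b) / (2 * a + 2 * b) with hβ
  have hbR : (0:ℝ) < b := by exact_mod_cast hb
  have haR : (0:ℝ) < a := by exact_mod_cast ha
  have hden : (0:ℝ) < 2 * a + 2 * b := by positivity
  have hβ0 : 0 < β := div_pos (by positivity) hden
  have hβ1 : β < 1 := by rw [hβ, div_lt_one hden]; linarith
  have h1β : 0 < 1 - β := by linarith
  have hl2 : 0 < Real.log 2 := Real.log_pos one_lt_two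
  refine ⟨(1/(1-β)) * (1 + (Real.log 2)⁻¹),
    mul_pos (by positivity) (add_pos one_pos (inv_pos.mpr hl2)), ?_⟩
  intro X hX
  set c : ℝ := (1 : ℝ) / (2 * ((a:ℝ) + b)) with hc
  have hc0 : 0 < c := by positivity
  have hX0 : (0:ℝ) < X := by linarith
  set N := ⌊X⌋₊ with hN
  have hXN : (N:ℝ) ≤ X := Nat.floor_le hX0.le
  have hN2 : 2 ≤ N := Nat.le_floor (by exact_mod_cast hX.le)
  have hN1 : 1 ≤ N := by omega
  set F : ℕ × ℕ → ℝ := fun p => (p.1 : ℝ) ^ (-α) * (p.2 : ℝ) ^ (-β) with hF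
  have hmem : ∀ p : ℕ × ℕ, 1 ≤ p.1 → 1 ≤ p.2 →
      p.1 ≤ p.1 ^ a * p.2 ^ b ∧ p.2 ≤ p.1 ^ a * p.2 ^ b := by
    intro p h1 h2
    constructor
    · calc p.1 ≤ p.1 ^ a := Nat.le_self_pow ha.ne' _
        _ ≤ _ := Nat.le_mul_of_pos_right _ (pow_pos h2 b)
    · calc p.2 ≤ p.2 ^ b := Nat.le_self_pow hb.ne' _
        _ ≤ _ := Nat.le_mul_of_pos_left _ (pow_pos h1 a)
  have hA : ∑ n ∈ Finset.Icc 1 N, g a b n =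
      ∑ p ∈ (Icc 1 N ×ˢ Icc 1 N).filter (fun p => p.1 ^ a * p.2 ^ b ∈ Icc 1 N), F p := by
    rw [← Finset.sum_fiberwise_eq_sum_filter]
    refine Finset.sum_congr rfl (fun n hn => ?_)
    rw [Finset.mem_Icc] at hn
    show g a b n = _
    rw [g]
    congr 1
    ext p
    simp only [Finset.mem_filter, Finset.mem_product, Finset.mem_Icc]
    constructor
    · rintro ⟨⟨⟨h11, h12⟩, h21, h22⟩, heq⟩
      exact ⟨⟨⟨h11, h12.trans hn.2⟩, h21, h22.trans hn.2⟩, heq⟩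
    · rintro ⟨⟨⟨h11, h12⟩, h21, h22⟩, heq⟩
      obtain ⟨k1, k2⟩ := hmem p h11 h21
      rw [heq] at k1 k2
      exact ⟨⟨⟨h11, k1⟩, h21, k2⟩, heq⟩
  rw [hA, Finset.sum_filter, Finset.sum_product]
  simp only [← Finset.sum_filter]
  have hstep : ∀ h ∈ Icc 1 N,
      ∑ r ∈ (Icc 1 N).filter (fun r => h ^ a * r ^ b ∈ Icc 1 N), F (h, r) ≤
        X ^ c / (1 - β) * (h:ℝ)⁻¹ := by
    intro h hh
    rw [Finset.mem_Icc] at hh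
    have hh0 : (0:ℝ) < (h:ℝ) := by exact_mod_cast hh.1
    have hha : (0:ℝ) < (h:ℝ) ^ a := pow_pos hh0 a
    set Y : ℝ := (X / (h:ℝ) ^ a) ^ ((1:ℝ)/b) with hY
    have hXh0 : (0:ℝ) ≤ X / (h:ℝ) ^ a := by positivity
    have hY0 : 0 ≤ Y := Real.rpow_nonneg hXh0 _
    set m := ⌊Y⌋₊ with hm
    have hsub : (Icc 1 N).filter (fun r => h ^ a * r ^ b ∈ Icc 1 N) ⊆ Icc 1 m := by
      intro r hr
      simp only [Finset.mem_filter, Finset.mem_Icc] at hr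
      obtain ⟨⟨hr1, _⟩, _, hrN⟩ := hr
      rw [Finset.mem_Icc]
      refine ⟨hr1, Nat.le_floor ?_⟩
      have hcast : ((h:ℝ)) ^ a * ((r:ℝ)) ^ b ≤ X := by
        calc ((h:ℝ)) ^ a * ((r:ℝ)) ^ b = ((h ^ a * r ^ b : ℕ) : ℝ) := by push_cast; ring
          _ ≤ (N : ℝ) := by exact_mod_cast hrN
          _ ≤ X := hXN
      have hrb : ((r:ℝ)) ^ b ≤ X / (h:ℝ) ^ a := (le_div_iff₀ hha).mpr (by linarith [hcast, mul_comm (((h:ℝ))^a) (((r:ℝ))^b)])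
      have hr0 : (0:ℝ) ≤ (r:ℝ) := Nat.cast_nonneg r
      calc (r:ℝ) = (((r:ℝ)) ^ (b:ℕ)) ^ ((1:ℝ)/b) := by
            rw [← Real.rpow_natCast (r:ℝ) b, ← Real.rpow_mul hr0]
            rw [mul_one_div, div_self (by exact_mod_cast hb.ne'), Real.rpow_one]
        _ ≤ Y := Real.rpow_le_rpow (by positivity) hrb (by positivity)
    have hinner : ∑ r ∈ (Icc 1 N).filter (fun r => h ^ a * r ^ b ∈ Icc 1 N), (r:ℝ) ^ (-β)
        ≤ Y ^ (1-β) / (1-β) := by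
      calc ∑ r ∈ (Icc 1 N).filter (fun r => h ^ a * r ^ b ∈ Icc 1 N), (r:ℝ) ^ (-β)
          ≤ ∑ r ∈ Icc 1 m, (r:ℝ) ^ (-β) :=
            Finset.sum_le_sum_of_subset_of_nonneg hsub
              (fun i _ _ => Real.rpow_nonneg (Nat.cast_nonneg i) _)
        _ ≤ (m:ℝ) ^ (1-β) / (1-β) := sum_rpow_neg_le hβ0 hβ1 m
        _ ≤ Y ^ (1-β) / (1-β) := by
            gcongr
            exact Nat.floor_le hY0
    have hYval : Y ^ (1-β) = X ^ c * (h:ℝ) ^ (-((a:ℝ) * c)) := by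
      have hexp : ((1:ℝ)/b) * (1-β) = c := by
        rw [hβ, hc]; field_simp; ring
      rw [hY, ← Real.rpow_mul hXh0, hexp, Real.div_rpow hX0.le hha.le,
        ← Real.rpow_natCast (h:ℝ) a, ← Real.rpow_mul hh0.le, div_eq_mul_inv,
        ← Real.rpow_neg hh0.le]
    have hpow1 : (h:ℝ) ^ (-α) * (h:ℝ) ^ (-((a:ℝ) * c)) = (h:ℝ)⁻¹ := by
      rw [← Real.rpow_add hh0]
      have : -α + -((a:ℝ) * c) = -1 := by
        rw [hα, hc]; field_simp; ring
      rw [this, Real.rpow_neg_one]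
    calc ∑ r ∈ (Icc 1 N).filter (fun r => h ^ a * r ^ b ∈ Icc 1 N), F (h, r)
        = (h:ℝ) ^ (-α) * ∑ r ∈ (Icc 1 N).filter (fun r => h ^ a * r ^ b ∈ Icc 1 N), (r:ℝ) ^ (-β) := by
          rw [Finset.mul_sum]
      _ ≤ (h:ℝ) ^ (-α) * (Y ^ (1-β) / (1-β)) := by
          gcongr
      _ = X ^ c / (1 - β) * (h:ℝ)⁻¹ := by
          rw [hYval]
          rw [show (h:ℝ) ^ (-α) * (X ^ c * (h:ℝ) ^ (-((a:ℝ) * c)) / (1-β))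
            = X ^ c / (1-β) * ((h:ℝ) ^ (-α) * (h:ℝ) ^ (-((a:ℝ) * c))) by ring, hpow1]
  have hXc0 : 0 < X ^ c := Real.rpow_pos_of_pos hX0 c
  have hlogN : Real.log N ≤ Real.log X := Real.log_le_log (Nat.cast_pos.mpr (by omega)) hXN
  have hlog2X : Real.log 2 ≤ Real.log X := Real.log_le_log two_pos hX.le
  calc ∑ h ∈ Icc 1 N, ∑ r ∈ (Icc 1 N).filter (fun r => h ^ a * r ^ b ∈ Icc 1 N), F (h, r)
      ≤ ∑ h ∈ Icc 1 N, X ^ c / (1 - β) * (h:ℝ)⁻¹ := Finset.sum_le_sum hstep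
    _ = X ^ c / (1 - β) * ∑ h ∈ Icc 1 N, (h:ℝ)⁻¹ := by rw [Finset.mul_sum]
    _ ≤ X ^ c / (1 - β) * (1 + Real.log N) := by
        gcongr
        exact sum_inv_le N
    _ ≤ X ^ c / (1 - β) * (1 + Real.log X) := by
        gcongr
    _ ≤ (1/(1-β)) * (1 + (Real.log 2)⁻¹) * X ^ c * Real.log X := by
        have h1 : 1 ≤ Real.log X / Real.log 2 := (one_le_div hl2).mpr hlog2X
        have h2 : (1:ℝ) + Real.log X ≤ (1 + (Real.log 2)⁻¹) * Real.log X := by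
          have : (1 + (Real.log 2)⁻¹) * Real.log X = Real.log X + Real.log X / Real.log 2 := by
            field_simp
          rw [this]
          linarith [(one_le_div hl2).mpr hlog2X]
        calc X ^ c / (1 - β) * (1 + Real.log X)
            ≤ X ^ c / (1 - β) * ((1 + (Real.log 2)⁻¹) * Real.log X) := by
              gcongr
          _ = (1/(1-β)) * (1 + (Real.log 2)⁻¹) * X ^ c * Real.log X := by ring
end

section
/- For coprime positive integers a < b and any real X > 2, \sum_{n \leq X} g_{a,b}(n) n^{-1/(2(a+b))} \ll (\log X)^2. -/
open Finset

lemma key_term (a b : ℕ) (ha : 0 < a) (hb : 0 < b) (h r : ℕ) (hh : 1 ≤ h) (hr : 1 ≤ r) :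
    (h : ℝ) ^ (-(((a : ℝ) + 2 * b) / (2 * a + 2 * b))) *
      (r : ℝ) ^ (-((2 * (a : ℝ) + b) / (2 * a + 2 * b))) *
      ((h ^ a * r ^ b : ℕ) : ℝ) ^ (-(1 / (2 * ((a : ℝ) + b)))) = (h : ℝ)⁻¹ * (r : ℝ)⁻¹ := by
  have hh' : (0:ℝ) < h := by exact_mod_cast hh
  have hr' : (0:ℝ) < r := by exact_mod_cast hr
  have ha' : (0:ℝ) < a := by exact_mod_cast ha
  have hb' : (0:ℝ) < b := by exact_mod_cast hb
  have hcast : ((h ^ a * r ^ b : ℕ) : ℝ) = (h:ℝ) ^ (a:ℝ) * (r:ℝ) ^ (b:ℝ) := by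
    push_cast
    rw [Real.rpow_natCast, Real.rpow_natCast]
  rw [hcast, Real.mul_rpow (by positivity) (by positivity)]
  rw [← Real.rpow_mul hh'.le, ← Real.rpow_mul hr'.le, mul_mul_mul_comm,
    ← Real.rpow_add hh', ← Real.rpow_add hr']
  have e1 : -(((a : ℝ) + 2 * b) / (2 * a + 2 * b)) + (a:ℝ) * (-(1 / (2 * ((a : ℝ) + b)))) = -1 := by
    field_simp
    ring
  have e2 : -((2 * (a : ℝ) + b) / (2 * a + 2 * b)) + (b:ℝ) * (-(1 / (2 * ((a : ℝ) + b)))) = -1 := by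
    field_simp
    ring
  rw [e1, e2, Real.rpow_neg_one, Real.rpow_neg_one]

theorem g_weighted_partial_sum (a b : ℕ) (ha : 0 < a) (hab : a < b)
    (hcop : Nat.Coprime a b) :
    ∃ C : ℝ, 0 < C ∧ ∀ X : ℝ, 2 < X →
      ∑ n ∈ Finset.Icc 1 ⌊X⌋₊, g a b n * (n : ℝ) ^ (-(1 / (2 * ((a : ℝ) + b)))) ≤
        C * (Real.log X) ^ 2 := by
  have hb : 0 < b := ha.trans hab
  refine ⟨((Real.log 2)⁻¹ + 1) ^ 2, by positivity, fun X hX => ?_⟩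
  set N := ⌊X⌋₊ with hN
  -- step 1 : rewrite each term
  have step1 : ∀ n ∈ Icc 1 N, g a b n * (n : ℝ) ^ (-(1 / (2 * ((a : ℝ) + b)))) =
      ∑ p ∈ (Finset.Icc 1 n ×ˢ Finset.Icc 1 n).filter (fun p => p.1 ^ a * p.2 ^ b = n),
        (p.1 : ℝ)⁻¹ * (p.2 : ℝ)⁻¹ := by
    intro n hn
    rw [g, Finset.sum_mul]
    refine Finset.sum_congr rfl fun p hp => ?_
    simp only [Finset.mem_filter, Finset.mem_product, Finset.mem_Icc] at hp
    obtain ⟨⟨⟨h1, _⟩, ⟨h2, _⟩⟩, heq⟩ := hp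
    rw [← heq]
    exact key_term a b ha hb p.1 p.2 h1 h2
  rw [Finset.sum_congr rfl step1]
  -- step 2 : enlarge the index set
  have step2 : ∑ n ∈ Icc 1 N,
      ∑ p ∈ (Finset.Icc 1 n ×ˢ Finset.Icc 1 n).filter (fun p => p.1 ^ a * p.2 ^ b = n),
        (p.1 : ℝ)⁻¹ * (p.2 : ℝ)⁻¹ ≤
      ∑ n ∈ Icc 1 N,
      ∑ p ∈ (Finset.Icc 1 N ×ˢ Finset.Icc 1 N).filter (fun p => p.1 ^ a * p.2 ^ b = n),
        (p.1 : ℝ)⁻¹ * (p.2 : ℝ)⁻¹ := by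
    refine Finset.sum_le_sum fun n hn => ?_
    refine Finset.sum_le_sum_of_subset_of_nonneg ?_ (fun p _ _ => by positivity)
    apply Finset.filter_subset_filter
    apply Finset.product_subset_product <;>
      exact Finset.Icc_subset_Icc_right (Finset.mem_Icc.mp hn).2
  refine step2.trans ?_
  -- swap the sums and collapse
  · have step3 : ∑ n ∈ Icc 1 N,
        ∑ p ∈ (Finset.Icc 1 N ×ˢ Finset.Icc 1 N).filter (fun p => p.1 ^ a * p.2 ^ b = n),
          (p.1 : ℝ)⁻¹ * (p.2 : ℝ)⁻¹ ≤
        ∑ p ∈ Finset.Icc 1 N ×ˢ Finset.Icc 1 N, (p.1 : ℝ)⁻¹ * (p.2 : ℝ)⁻¹ := by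
      simp only [Finset.sum_filter]
      rw [Finset.sum_comm]
      refine Finset.sum_le_sum fun p hp => ?_
      rw [Finset.sum_ite_eq]
      split
      · exact le_refl _
      · positivity
    refine step3.trans ?_
    rw [Finset.sum_product]
    have : ∑ h ∈ Icc 1 N, ∑ r ∈ Icc 1 N, (h : ℝ)⁻¹ * (r : ℝ)⁻¹ =
        (∑ h ∈ Icc 1 N, (h : ℝ)⁻¹) * (∑ r ∈ Icc 1 N, (r : ℝ)⁻¹) := by
      rw [Finset.sum_mul_sum]
    rw [this]
    -- harmonic bound
    have hHarm : ∑ i ∈ Icc 1 N, (i : ℝ)⁻¹ ≤ 1 + Real.log N := by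
      have := harmonic_le_one_add_log N
      rw [harmonic_eq_sum_Icc] at this
      push_cast at this
      simpa [one_div] using this
    have hN1 : 1 ≤ N := by
      rw [hN]; exact Nat.le_floor (by push_cast; linarith)
    have hNX : (N : ℝ) ≤ X := Nat.floor_le (by linarith)
    have hlogN : Real.log N ≤ Real.log X :=
      Real.log_le_log (by exact_mod_cast hN1) hNX
    have hlog2 : Real.log 2 ≤ Real.log X := Real.log_le_log (by norm_num) hX.le
    have hlog2pos : 0 < Real.log 2 := Real.log_pos (by norm_num)
    have hbound : ∑ i ∈ Icc 1 N, (i : ℝ)⁻¹ ≤ ((Real.log 2)⁻¹ + 1) * Real.log X := by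
      calc ∑ i ∈ Icc 1 N, (i : ℝ)⁻¹ ≤ 1 + Real.log N := hHarm
        _ ≤ 1 + Real.log X := by linarith
        _ ≤ (Real.log 2)⁻¹ * Real.log X + Real.log X := by
            have : 1 ≤ (Real.log 2)⁻¹ * Real.log X := by
              rw [inv_mul_eq_div, le_div_iff₀ hlog2pos]
              linarith
            linarith
        _ = ((Real.log 2)⁻¹ + 1) * Real.log X := by ring
    have hnonneg : 0 ≤ ∑ i ∈ Icc 1 N, (i : ℝ)⁻¹ :=
      Finset.sum_nonneg fun i _ => by positivity
    calc (∑ h ∈ Icc 1 N, (h : ℝ)⁻¹) * (∑ r ∈ Icc 1 N, (r : ℝ)⁻¹)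
        ≤ (((Real.log 2)⁻¹ + 1) * Real.log X) * (((Real.log 2)⁻¹ + 1) * Real.log X) :=
          mul_le_mul hbound hbound hnonneg
            (mul_nonneg (by positivity) (le_trans hlog2pos.le hlog2))
      _ = ((Real.log 2)⁻¹ + 1) ^ 2 * Real.log X ^ 2 := by ring
end
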